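/- arXiv:2004.03954 — 3 statements merged into one kernel-verified Lean document; each statement's English description precedes it below -/
import Mathlib

section
/- If the DM-TWC satisfies condition (a) and condition (b2), then C_I = C_O. -/
open scoped BigOperators

/-- `P` is a probability distribution on the finite alphabet `A`. -/
def IsDist {A : Type*} [Fintype A] (P : A → ℝ) : Prop :=
  (∀ a, 0 ≤ P a) ∧ ∑ a, P a = 1

/-- Input–output mutual information 𝓘(P, W) (in bits) of a channel `W`
from the finite alphabet `A` to the finite alphabet `B` under input distribution `P`. -/
noncomputable def mutInfo {A B : Type*} [Fintype A] [Fintype B]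
    (P : A → ℝ) (W : A → B → ℝ) : ℝ :=
  ∑ a, ∑ b, P a * W a b * Real.logb 2 (W a b / ∑ a', P a' * W a' b)

/-- Shannon entropy (base 2) of a distribution on a finite alphabet. -/
noncomputable def ent {B : Type*} [Fintype B] (Q : B → ℝ) : ℝ :=
  -∑ b, Q b * Real.logb 2 (Q b)

section TWC

variable {X1 X2 Y1 Y2 : Type*} [Fintype X1] [Fintype X2] [Fintype Y1] [Fintype Y2]

/-- A joint input distribution on `X1 × X2`. -/
def IsJointDist (P : X1 → X2 → ℝ) : Prop :=
  (∀ x1 x2, 0 ≤ P x1 x2) ∧ ∑ x1, ∑ x2, P x1 x2 = 1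

/-- Marginal of a joint input distribution on `X1`. -/
noncomputable def margin1 (P : X1 → X2 → ℝ) (x1 : X1) : ℝ := ∑ x2, P x1 x2

/-- Marginal of a joint input distribution on `X2`. -/
noncomputable def margin2 (P : X1 → X2 → ℝ) (x2 : X2) : ℝ := ∑ x1, P x1 x2

/-- Conditional distribution P_{X₁|X₂=x₂}. -/
noncomputable def cond1given2 (P : X1 → X2 → ℝ) (x2 : X2) (x1 : X1) : ℝ :=
  P x1 x2 / margin2 P x2

/-- Conditional distribution P_{X₂|X₁=x₁}. -/
noncomputable def cond2given1 (P : X1 → X2 → ℝ) (x1 : X1) (x2 : X2) : ℝ :=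
  P x1 x2 / margin1 P x1

/-- The conditional mutual information I(X₁;Y₂|X₂) under the joint input distribution `P`,
where `W2` is the marginal channel P_{Y₂|X₁,X₂}. -/
noncomputable def condMI12 (P : X1 → X2 → ℝ) (W2 : X1 → X2 → Y2 → ℝ) : ℝ :=
  ∑ x2, margin2 P x2 * mutInfo (cond1given2 P x2) (fun x1 => W2 x1 x2)

/-- The conditional mutual information I(X₂;Y₁|X₁) under the joint input distribution `P`,
where `W1` is the marginal channel P_{Y₁|X₁,X₂}. -/
noncomputable def condMI21 (P : X1 → X2 → ℝ) (W1 : X1 → X2 → Y1 → ℝ) : ℝ :=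
  ∑ x1, margin1 P x1 * mutInfo (cond2given1 P x1) (fun x2 => W1 x1 x2)

/-- The rate region 𝓡(P_{X₁,X₂}). -/
noncomputable def rateRegion (W1 : X1 → X2 → Y1 → ℝ) (W2 : X1 → X2 → Y2 → ℝ)
    (P : X1 → X2 → ℝ) : Set (ℝ × ℝ) :=
  {r | 0 ≤ r.1 ∧ r.1 ≤ condMI12 P W2 ∧ 0 ≤ r.2 ∧ r.2 ≤ condMI21 P W1}

/-- Shannon's inner bound C_I: the closure of the convex hull of the union of the
rate regions of all product input distributions. -/
noncomputable def innerBound (W1 : X1 → X2 → Y1 → ℝ) (W2 : X1 → X2 → Y2 → ℝ) :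
    Set (ℝ × ℝ) :=
  closure (convexHull ℝ
    (⋃ P ∈ {P : X1 → X2 → ℝ |
        ∃ P1 P2, IsDist P1 ∧ IsDist P2 ∧ P = fun x1 x2 => P1 x1 * P2 x2},
      rateRegion W1 W2 P))

/-- Shannon's outer bound C_O: the union of the rate regions of all joint input
distributions. -/
noncomputable def outerBound (W1 : X1 → X2 → Y1 → ℝ) (W2 : X1 → X2 → Y2 → ℝ) :
    Set (ℝ × ℝ) :=
  ⋃ P ∈ {P : X1 → X2 → ℝ | IsJointDist P}, rateRegion W1 W2 P

/-- The largest input–output mutual information of the one-way channel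
P_{Y₂|X₁,X₂=x₂}. -/
noncomputable def capAt (W2 : X1 → X2 → Y2 → ℝ) (x2 : X2) : ℝ :=
  sSup {I | ∃ P : X1 → ℝ, IsDist P ∧ I = mutInfo P (fun x1 => W2 x1 x2)}

/-- α*: how close the channels {P_{Y₂|X₁,X₂=x₂}} are to having a common optimal
input distribution. -/
noncomputable def alphaStar (W2 : X1 → X2 → Y2 → ℝ) : ℝ :=
  sInf {a | ∃ Pt : X1 → ℝ, IsDist Pt ∧
    a = ⨆ x2, |mutInfo Pt (fun x1 => W2 x1 x2) - capAt W2 x2|}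

/-- β*: the degree of invariance in the input–output mutual information of the
channels {P_{Y₁|X₁=x₁,X₂}}. -/
noncomputable def betaStar (W1 : X1 → X2 → Y1 → ℝ) : ℝ :=
  sSup {b | ∃ (P : X2 → ℝ) (x1 x1' : X1), IsDist P ∧ x1 ≠ x1' ∧
    b = |mutInfo P (fun x2 => W1 x1 x2) - mutInfo P (fun x2 => W1 x1' x2)|}

/-- I*₁ = max_{x₂} max_{P} 𝓘(P, P_{Y₂|X₁,X₂=x₂}). -/
noncomputable def IStar1 (W2 : X1 → X2 → Y2 → ℝ) : ℝ :=
  sSup {I | ∃ (x2 : X2) (P : X1 → ℝ), IsDist P ∧ I = mutInfo P (fun x1 => W2 x1 x2)}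

/-- I*₂ = max_{x₁} max_{P} 𝓘(P, P_{Y₁|X₁=x₁,X₂}). -/
noncomputable def IStar2 (W1 : X1 → X2 → Y1 → ℝ) : ℝ :=
  sSup {I | ∃ (x1 : X1) (P : X2 → ℝ), IsDist P ∧ I = mutInfo P (fun x2 => W1 x1 x2)}

/-- Condition (a): `Pstar` is a common optimal input distribution for the channels
{P_{Y₂|X₁,X₂=x₂} : x₂ ∈ 𝒳₂}. -/
def CondA (W2 : X1 → X2 → Y2 → ℝ) (Pstar : X1 → ℝ) : Prop :=
  IsDist Pstar ∧ ∀ x2 : X2, ∀ P : X1 → ℝ, IsDist P →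
    mutInfo P (fun x1 => W2 x1 x2) ≤ mutInfo Pstar (fun x1 => W2 x1 x2)

/-- Condition (b1): for every input distribution on 𝒳₂, the input–output mutual
information of P_{Y₁|X₁=x₁,X₂} does not depend on x₁. -/
def CondB1 (W1 : X1 → X2 → Y1 → ℝ) : Prop :=
  ∀ P : X2 → ℝ, IsDist P → ∀ x1 x1' : X1,
    mutInfo P (fun x2 => W1 x1 x2) = mutInfo P (fun x2 => W1 x1' x2)

/-- H(Y₁|X₁,X₂) under the joint input distribution `P`. -/
noncomputable def condEntFull (P : X1 → X2 → ℝ) (W1 : X1 → X2 → Y1 → ℝ) : ℝ :=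
  ∑ x1, ∑ x2, P x1 x2 * ent (W1 x1 x2)

/-- H(Y₁|X₁) under the joint input distribution `P`. -/
noncomputable def condEntY1X1 (P : X1 → X2 → ℝ) (W1 : X1 → X2 → Y1 → ℝ) : ℝ :=
  ∑ x1, margin1 P x1 * ent (fun y1 => ∑ x2, cond2given1 P x1 x2 * W1 x1 x2 y1)

/-- Condition (b2), part (i): H(Y₁|X₁,X₂) depends on the joint input distribution
only through its marginal on 𝒳₂. -/
def CondB2i (W1 : X1 → X2 → Y1 → ℝ) : Prop :=
  ∀ P Q : X1 → X2 → ℝ, IsJointDist P → IsJointDist Q →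
    margin2 P = margin2 Q → condEntFull P W1 = condEntFull Q W1

/-- Condition (b2), part (ii), relative to the common optimal input `Pstar`:
H⁽¹⁾(Y₁|X₁) ≤ H⁽²⁾(Y₁|X₁) where P⁽²⁾ = P*_{X₁}·P⁽¹⁾_{X₂}. -/
def CondB2ii (W1 : X1 → X2 → Y1 → ℝ) (Pstar : X1 → ℝ) : Prop :=
  ∀ P : X1 → X2 → ℝ, IsJointDist P →
    condEntY1X1 P W1 ≤ condEntY1X1 (fun x1 x2 => Pstar x1 * margin2 P x2) W1

/-!
Under (a) and (b2) a joint input distribution `P` can be replaced by the product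
`P* ⊗ P_{X₂}` without shrinking its rate region: (a) bounds each summand of
`I(X₁;Y₂|X₂)`, and in `I(X₂;Y₁|X₁) = H(Y₁|X₁) - H(Y₁|X₁,X₂)` part (ii) of (b2) can only
raise the first term while part (i) leaves the second unchanged. Hence both bounds are the
union, over input distributions `Q` on `𝒳₂`, of the boxes `[0, F Q]`, where `F Q` is the
rate pair of `P* ⊗ Q`. On the simplex `F` is continuous and concave (its first coordinate is
linear in `Q`, its second a mixture of mutual informations, which are concave in the input),
so this union is convex and closed, and taking the closed convex hull changes nothing.
-/

open Set

theorem ent_eq_sum_negMulLog {B : Type*} [Fintype B] (Q : B → ℝ) :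
    ent Q = (Real.log 2)⁻¹ * ∑ b, Real.negMulLog (Q b) := by
  simp only [ent, Real.negMulLog, Real.logb, Finset.mul_sum, ← Finset.sum_neg_distrib]
  exact Finset.sum_congr rfl fun b _ => by ring

theorem continuous_ent {B : Type*} [Fintype B] : Continuous (ent : (B → ℝ) → ℝ) := by
  simp only [funext ent_eq_sum_negMulLog]
  fun_prop

theorem concaveOn_finset_sum {ι E : Type*} [AddCommMonoid E] [Module ℝ E] {s : Set E}
    (hs : Convex ℝ s) (t : Finset ι) {f : ι → E → ℝ} (hf : ∀ i ∈ t, ConcaveOn ℝ s (f i)) :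
    ConcaveOn ℝ s (fun x => ∑ i ∈ t, f i x) := by
  classical
  induction t using Finset.induction_on with
  | empty => simpa using concaveOn_const 0 hs
  | insert i t hi ih =>
    simp only [Finset.sum_insert hi]
    exact (hf i (Finset.mem_insert_self i t)).add
      (ih fun j hj => hf j (Finset.mem_insert_of_mem hj))

theorem ConcaveOn.prodMk {E β γ : Type*} [AddCommMonoid E] [Module ℝ E] [AddCommMonoid β]
    [PartialOrder β] [Module ℝ β] [AddCommMonoid γ] [PartialOrder γ] [Module ℝ γ] {s : Set E}
    {f : E → β} {g : E → γ} (hf : ConcaveOn ℝ s f) (hg : ConcaveOn ℝ s g) :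
    ConcaveOn ℝ s (fun x => (f x, g x)) :=
  ⟨hf.1, fun _ hx _ hy _ _ ha hb hab => ⟨hf.2 hx hy ha hb hab, hg.2 hx hy ha hb hab⟩⟩

theorem concaveOn_ent {B : Type*} [Fintype B] : ConcaveOn ℝ (Ici 0) (ent : (B → ℝ) → ℝ) := by
  refine ConcaveOn.congr ?_ fun Q _ => (ent_eq_sum_negMulLog Q).symm
  refine (concaveOn_finset_sum (convex_Ici 0) _ fun b _ => ?_).smul
    (inv_nonneg.2 (Real.log_nonneg one_le_two))
  exact (Real.concaveOn_negMulLog.comp_linearMap (LinearMap.proj b : (B → ℝ) →ₗ[ℝ] ℝ)).subset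
    (fun Q hQ => hQ b) (convex_Ici 0)

theorem mutInfo_eq_ent_sub {A B : Type*} [Fintype A] [Fintype B] {P : A → ℝ} {W : A → B → ℝ}
    (hP : ∀ a, 0 ≤ P a) (hW : ∀ a b, 0 ≤ W a b) :
    mutInfo P W = ent (fun b => ∑ a, P a * W a b) - ∑ a, P a * ent (W a) := by
  have hlog : ∀ a b, P a * W a b * Real.logb 2 (W a b / ∑ a', P a' * W a' b)
      = P a * W a b * Real.logb 2 (W a b)
        - P a * W a b * Real.logb 2 (∑ a', P a' * W a' b) := by
    intro a b
    rcases (mul_nonneg (hP a) (hW a b)).eq_or_lt with h | h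
    · rw [← h]; ring
    · have hsum : 0 < ∑ a', P a' * W a' b := h.trans_le <|
        Finset.single_le_sum (fun i _ => mul_nonneg (hP i) (hW i b)) (Finset.mem_univ a)
      rw [Real.logb_div (right_ne_zero_of_mul h.ne') hsum.ne', mul_sub]
  simp only [mutInfo, ent, hlog, Finset.sum_sub_distrib, Finset.mul_sum, mul_neg,
    Finset.sum_neg_distrib, sub_neg_eq_add, neg_add_eq_sub]
  rw [Finset.sum_comm (f := fun a b => P a * W a b * Real.logb 2 (∑ a', P a' * W a' b))]
  simp only [Finset.sum_mul, mul_assoc]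

theorem concaveOn_mutInfo {A B : Type*} [Fintype A] [Fintype B] {W : A → B → ℝ}
    (hW : ∀ a b, 0 ≤ W a b) : ConcaveOn ℝ (Ici 0) (fun P => mutInfo P W) := by
  have hout : ConcaveOn ℝ (Ici 0) (fun P : A → ℝ => ent (Matrix.vecMul P (Matrix.of W))) :=
    (concaveOn_ent.comp_linearMap (Matrix.vecMulLinear (Matrix.of W))).subset
      (fun P hP b => Finset.sum_nonneg fun a _ => mul_nonneg (hP a) (hW a b)) (convex_Ici 0)
  have hlin := LinearMap.convexOn ((dotProductBilin ℝ ℝ).flip fun a => ent (W a))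
    (convex_Ici (0 : A → ℝ))
  exact (hout.sub hlin).congr fun P hP => (mutInfo_eq_ent_sub hP hW).symm

theorem continuousOn_mutInfo {A B : Type*} [Fintype A] [Fintype B] {W : A → B → ℝ}
    (hW : ∀ a b, 0 ≤ W a b) : ContinuousOn (fun P => mutInfo P W) (Ici 0) := by
  have hcont : Continuous fun P : A → ℝ =>
      ent (fun b => ∑ a, P a * W a b) - ∑ a, P a * ent (W a) := by
    have := continuous_ent (B := B)
    fun_prop
  exact hcont.continuousOn.congr fun P hP => mutInfo_eq_ent_sub hP hW

theorem convex_biUnion_Icc {E β : Type*} [AddCommMonoid E] [Module ℝ E] [AddCommGroup β]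
    [PartialOrder β] [IsOrderedAddMonoid β] [Module ℝ β] [PosSMulMono ℝ β] {K : Set E}
    {F : E → β} (hF : ConcaveOn ℝ K F) : Convex ℝ (⋃ x ∈ K, Icc 0 (F x)) := by
  intro r hr r' hr' a b ha hb hab
  obtain ⟨x, hx, hr0, hrF⟩ := mem_iUnion₂.1 hr
  obtain ⟨x', hx', hr0', hrF'⟩ := mem_iUnion₂.1 hr'
  refine mem_iUnion₂.2 ⟨a • x + b • x', hF.1 hx hx' ha hb hab,
    add_nonneg (smul_nonneg ha hr0) (smul_nonneg hb hr0'), ?_⟩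
  calc a • r + b • r' ≤ a • F x + b • F x' :=
        add_le_add (smul_le_smul_of_nonneg_left hrF ha) (smul_le_smul_of_nonneg_left hrF' hb)
    _ ≤ F (a • x + b • x') := hF.2 hx hx' ha hb hab

open scoped Pointwise in
theorem isClosed_biUnion_Icc {E β : Type*} [TopologicalSpace E] [AddCommGroup β]
    [TopologicalSpace β] [IsTopologicalAddGroup β] [PartialOrder β] [IsOrderedAddMonoid β]
    [OrderClosedTopology β] {K : Set E} {F : E → β} (hK : IsCompact K) (hF : ContinuousOn F K) :
    IsClosed (⋃ x ∈ K, Icc 0 (F x)) := by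
  have hsplit : ⋃ x ∈ K, Icc 0 (F x) = Ici 0 ∩ (F '' K + Iic 0) := by
    ext r
    simp only [mem_iUnion, mem_Icc, mem_inter_iff, mem_Ici, Set.mem_add, mem_image, mem_Iic,
      exists_prop]
    constructor
    · rintro ⟨x, hx, hr0, hrF⟩
      exact ⟨hr0, F x, ⟨x, hx, rfl⟩, r - F x, sub_nonpos.2 hrF, add_sub_cancel _ _⟩
    · rintro ⟨hr0, _, ⟨x, hx, rfl⟩, v, hv, rfl⟩
      exact ⟨x, hx, hr0, add_le_of_nonpos_right hv⟩
  rw [hsplit]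
  exact isClosed_Ici.inter (isClosed_Iic.add_left_of_isCompact (hK.image_of_continuousOn hF))

section ProductInputs

variable {W1 : X1 → X2 → Y1 → ℝ} {W2 : X1 → X2 → Y2 → ℝ} {P : X1 → X2 → ℝ}
  {P1 : X1 → ℝ} {Q : X2 → ℝ}

theorem rateRegion_eq_Icc : rateRegion W1 W2 P = Icc 0 (condMI12 P W2, condMI21 P W1) := by
  ext r
  simp only [rateRegion, mem_ofPred_eq, mem_Icc, Prod.le_def, Prod.fst_zero, Prod.snd_zero]
  tauto

theorem isDist_margin2 (hP : IsJointDist P) : IsDist (margin2 P) :=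
  ⟨fun x2 => Finset.sum_nonneg fun x1 _ => hP.1 x1 x2, by rw [← hP.2, Finset.sum_comm]; rfl⟩

omit [Fintype X2] in
theorem isDist_cond1given2 (hP : ∀ x1 x2, 0 ≤ P x1 x2) {x2 : X2} (h : margin2 P x2 ≠ 0) :
    IsDist (cond1given2 P x2) :=
  ⟨fun x1 => div_nonneg (hP x1 x2) (Finset.sum_nonneg fun x1 _ => hP x1 x2),
    by simp only [cond1given2, ← Finset.sum_div]; exact div_self h⟩

theorem isJointDist_mul (hP1 : IsDist P1) (hQ : IsDist Q) :
    IsJointDist (fun x1 x2 => P1 x1 * Q x2) :=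
  ⟨fun x1 x2 => mul_nonneg (hP1.1 x1) (hQ.1 x2),
    by simp only [← Finset.mul_sum, hQ.2, mul_one, hP1.2]⟩

omit [Fintype X1] in
theorem margin1_mul (hQ : ∑ x2, Q x2 = 1) : margin1 (fun x1 x2 => P1 x1 * Q x2) = P1 := by
  funext x1; rw [margin1, ← Finset.mul_sum, hQ, mul_one]

omit [Fintype X2] in
theorem margin2_mul (hP1 : ∑ x1, P1 x1 = 1) : margin2 (fun x1 x2 => P1 x1 * Q x2) = Q := by
  funext x2; rw [margin2, ← Finset.sum_mul, hP1, one_mul]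

theorem condMI12_mul (hP1 : ∑ x1, P1 x1 = 1) :
    condMI12 (fun x1 x2 => P1 x1 * Q x2) W2 = ∑ x2, Q x2 * mutInfo P1 (fun x1 => W2 x1 x2) := by
  refine Finset.sum_congr rfl fun x2 _ => ?_
  rw [margin2_mul hP1]
  rcases eq_or_ne (Q x2) 0 with h | h
  · rw [h, zero_mul, zero_mul]
  · congr 2
    funext x1
    rw [cond1given2, margin2_mul hP1, mul_div_cancel_right₀ _ h]

theorem condMI21_mul (hQ : ∑ x2, Q x2 = 1) :
    condMI21 (fun x1 x2 => P1 x1 * Q x2) W1 = ∑ x1, P1 x1 * mutInfo Q (fun x2 => W1 x1 x2) := by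
  refine Finset.sum_congr rfl fun x1 _ => ?_
  rw [margin1_mul hQ]
  rcases eq_or_ne (P1 x1) 0 with h | h
  · rw [h, zero_mul, zero_mul]
  · congr 2
    funext x2
    rw [cond2given1, margin1_mul hQ, mul_div_cancel_left₀ _ h]

theorem condMI21_eq_condEntY1X1_sub_condEntFull (hP : ∀ x1 x2, 0 ≤ P x1 x2)
    (hW1 : ∀ x1 x2 y, 0 ≤ W1 x1 x2 y) :
    condMI21 P W1 = condEntY1X1 P W1 - condEntFull P W1 := by
  rw [condMI21, condEntY1X1, condEntFull, ← Finset.sum_sub_distrib]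
  refine Finset.sum_congr rfl fun x1 _ => ?_
  rcases eq_or_ne (margin1 P x1) 0 with h | h
  · have hzero : ∀ x2, P x1 x2 = 0 := fun x2 =>
      (Finset.sum_eq_zero_iff_of_nonneg fun x2 _ => hP x1 x2).1 h x2 (Finset.mem_univ x2)
    simp [h, hzero]
  · have hcond : ∀ x2, 0 ≤ cond2given1 P x1 x2 := fun x2 =>
      div_nonneg (hP x1 x2) (Finset.sum_nonneg fun x2 _ => hP x1 x2)
    rw [mutInfo_eq_ent_sub hcond (hW1 x1), mul_sub, Finset.mul_sum]
    congr 2 with x2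
    rw [cond2given1, ← mul_assoc, mul_div_cancel₀ _ h]

noncomputable def productRates (W1 : X1 → X2 → Y1 → ℝ) (W2 : X1 → X2 → Y2 → ℝ) (P1 : X1 → ℝ)
    (Q : X2 → ℝ) : ℝ × ℝ :=
  (∑ x2, Q x2 * mutInfo P1 (fun x1 => W2 x1 x2), ∑ x1, P1 x1 * mutInfo Q (fun x2 => W1 x1 x2))

theorem rateRegion_mul (hP1 : IsDist P1) (hQ : IsDist Q) :
    rateRegion W1 W2 (fun x1 x2 => P1 x1 * Q x2) = Icc 0 (productRates W1 W2 P1 Q) := by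
  rw [rateRegion_eq_Icc, condMI12_mul hP1.2, condMI21_mul hQ.2, productRates]

theorem concaveOn_productRates (hW1 : ∀ x1 x2 y, 0 ≤ W1 x1 x2 y) (hP1 : ∀ x1, 0 ≤ P1 x1) :
    ConcaveOn ℝ (stdSimplex ℝ X2) (productRates W1 W2 P1) :=
  (LinearMap.concaveOn ((dotProductBilin ℝ ℝ).flip fun x2 => mutInfo P1 (fun x1 => W2 x1 x2))
    (convex_stdSimplex ℝ X2)).prodMk
    (concaveOn_finset_sum (convex_stdSimplex ℝ X2) _ fun x1 _ =>
      ((concaveOn_mutInfo (hW1 x1)).subset (fun _ hQ => hQ.1) (convex_stdSimplex ℝ X2)).smul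
        (hP1 x1))

theorem continuousOn_productRates (hW1 : ∀ x1 x2 y, 0 ≤ W1 x1 x2 y) :
    ContinuousOn (productRates W1 W2 P1) (stdSimplex ℝ X2) :=
  (continuous_finsetSum _ fun x2 _ =>
      (continuous_apply x2).mul continuous_const).continuousOn.prodMk
    (continuousOn_finsetSum _ fun x1 _ =>
      continuousOn_const.mul ((continuousOn_mutInfo (hW1 x1)).mono fun _ hQ => hQ.1))

end ProductInputs

section Domination

variable {W1 : X1 → X2 → Y1 → ℝ} {W2 : X1 → X2 → Y2 → ℝ} {Pstar : X1 → ℝ} {P : X1 → X2 → ℝ}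

theorem condMI12_le_condMI12_mul_margin2 (ha : CondA W2 Pstar) (hP : IsJointDist P) :
    condMI12 P W2 ≤ condMI12 (fun x1 x2 => Pstar x1 * margin2 P x2) W2 := by
  rw [condMI12_mul ha.1.2]
  refine Finset.sum_le_sum fun x2 _ => ?_
  rcases eq_or_ne (margin2 P x2) 0 with h | h
  · rw [h, zero_mul, zero_mul]
  · exact mul_le_mul_of_nonneg_left (ha.2 x2 _ (isDist_cond1given2 hP.1 h))
      ((isDist_margin2 hP).1 x2)

theorem condMI21_le_condMI21_mul_margin2 (hW1 : ∀ x1 x2 y, 0 ≤ W1 x1 x2 y) (hPstar : IsDist Pstar)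
    (hb2i : CondB2i W1) (hb2ii : CondB2ii W1 Pstar) (hP : IsJointDist P) :
    condMI21 P W1 ≤ condMI21 (fun x1 x2 => Pstar x1 * margin2 P x2) W1 := by
  have hprod := isJointDist_mul hPstar (isDist_margin2 hP)
  have hfull : condEntFull P W1 = condEntFull (fun x1 x2 => Pstar x1 * margin2 P x2) W1 :=
    hb2i P _ hP hprod (margin2_mul hPstar.2).symm
  rw [condMI21_eq_condEntY1X1_sub_condEntFull hP.1 hW1,
    condMI21_eq_condEntY1X1_sub_condEntFull hprod.1 hW1, hfull]
  exact sub_le_sub_right (hb2ii P hP) _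

theorem rateRegion_subset_rateRegion_mul_margin2 (hW1 : ∀ x1 x2 y, 0 ≤ W1 x1 x2 y)
    (ha : CondA W2 Pstar) (hb2i : CondB2i W1) (hb2ii : CondB2ii W1 Pstar) (hP : IsJointDist P) :
    rateRegion W1 W2 P ⊆ rateRegion W1 W2 (fun x1 x2 => Pstar x1 * margin2 P x2) := by
  rw [rateRegion_eq_Icc, rateRegion_eq_Icc]
  exact Icc_subset_Icc_right ⟨condMI12_le_condMI12_mul_margin2 ha hP,
    condMI21_le_condMI21_mul_margin2 hW1 ha.1 hb2i hb2ii hP⟩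

theorem outerBound_eq_biUnion_Icc_productRates (hW1 : ∀ x1 x2 y, 0 ≤ W1 x1 x2 y)
    (ha : CondA W2 Pstar) (hb2i : CondB2i W1) (hb2ii : CondB2ii W1 Pstar) :
    outerBound W1 W2 = ⋃ Q ∈ stdSimplex ℝ X2, Icc 0 (productRates W1 W2 Pstar Q) := by
  refine subset_antisymm (iUnion₂_subset fun P hP => ?_) (iUnion₂_subset fun Q hQ => ?_)
  · have hQ := isDist_margin2 hP
    refine (rateRegion_subset_rateRegion_mul_margin2 hW1 ha hb2i hb2ii hP).trans ?_
    rw [rateRegion_mul ha.1 hQ]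
    exact subset_biUnion_of_mem (u := fun Q => Icc 0 (productRates W1 W2 Pstar Q)) hQ
  · rw [← rateRegion_mul ha.1 hQ]
    exact subset_biUnion_of_mem (u := rateRegion W1 W2) (isJointDist_mul ha.1 hQ)

theorem biUnion_rateRegion_product_eq_outerBound (hW1 : ∀ x1 x2 y, 0 ≤ W1 x1 x2 y)
    (ha : CondA W2 Pstar) (hb2i : CondB2i W1) (hb2ii : CondB2ii W1 Pstar) :
    (⋃ P ∈ {P : X1 → X2 → ℝ |
        ∃ P1 P2, IsDist P1 ∧ IsDist P2 ∧ P = fun x1 x2 => P1 x1 * P2 x2},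
      rateRegion W1 W2 P) = outerBound W1 W2 := by
  refine subset_antisymm (iUnion₂_subset ?_) ?_
  · rintro _ ⟨P1, P2, hP1, hP2, rfl⟩
    exact subset_biUnion_of_mem (u := rateRegion W1 W2) (isJointDist_mul hP1 hP2)
  · rw [outerBound_eq_biUnion_Icc_productRates hW1 ha hb2i hb2ii]
    refine iUnion₂_subset fun Q hQ => ?_
    rw [← rateRegion_mul ha.1 hQ]
    exact subset_biUnion_of_mem (u := rateRegion W1 W2) ⟨Pstar, Q, ha.1, hQ, rfl⟩

end Domination

theorem stmt9_general
    (W1 : X1 → X2 → Y1 → ℝ) (W2 : X1 → X2 → Y2 → ℝ)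
    (hW1 : ∀ x1 x2, IsDist (W1 x1 x2))
    (Pstar : X1 → ℝ) (ha : CondA W2 Pstar)
    (hb2i : CondB2i W1) (hb2ii : CondB2ii W1 Pstar) :
    innerBound W1 W2 = outerBound W1 W2 := by
  have hW1nn : ∀ x1 x2 y, 0 ≤ W1 x1 x2 y := fun x1 x2 => (hW1 x1 x2).1
  have hO := outerBound_eq_biUnion_Icc_productRates hW1nn ha hb2i hb2ii
  have hconvex : Convex ℝ (outerBound W1 W2) :=
    hO ▸ convex_biUnion_Icc (concaveOn_productRates hW1nn ha.1.1)
  have hclosed : IsClosed (outerBound W1 W2) :=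
    hO ▸ isClosed_biUnion_Icc (isCompact_stdSimplex ℝ X2) (continuousOn_productRates hW1nn)
  rw [innerBound, biUnion_rateRegion_product_eq_outerBound hW1nn ha hb2i hb2ii,
    hconvex.convexHull_eq, hclosed.closure_eq]

/-- if the DM-TWC satisfies conditions (a) and (b2), then C_I = C_O. -/
theorem stmt9 [Nonempty X1] [Nonempty X2]
    (W1 : X1 → X2 → Y1 → ℝ) (W2 : X1 → X2 → Y2 → ℝ)
    (hW1 : ∀ x1 x2, IsDist (W1 x1 x2)) (hW2 : ∀ x1 x2, IsDist (W2 x1 x2))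
    (Pstar : X1 → ℝ) (ha : CondA W2 Pstar)
    (hb2i : CondB2i W1) (hb2ii : CondB2ii W1 Pstar) :
    innerBound W1 W2 = outerBound W1 W2 :=
  stmt9_general W1 W2 hW1 Pstar ha hb2i hb2ii

end TWC
end

section
/- Suppose the DM-TWC satisfies condition (a) with common optimal input distribution P*_{X₁}. Then for every joint input distribution P⁽¹⁾_{X₁,X₂} with marginal P⁽¹⁾_{X₂}, setting P⁽²⁾_{X₁,X₂} = P*_{X₁}·P⁽¹⁾_{X₂}, one has I⁽¹⁾(X₁;Y₂|X₂) ≤ I⁽²⁾(X₁;Y₂|X₂). -/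
open scoped BigOperators

section TWC

variable {X1 X2 Y1 Y2 : Type*} [Fintype X1] [Fintype X2] [Fintype Y1] [Fintype Y2]

/-- under condition (a) with common optimal input P*_{X₁},
I⁽¹⁾(X₁;Y₂|X₂) ≤ I⁽²⁾(X₁;Y₂|X₂) where P⁽²⁾ = P*_{X₁}·P⁽¹⁾_{X₂}. -/
theorem stmt10 [Nonempty X1] [Nonempty X2]
    (W1 : X1 → X2 → Y1 → ℝ) (W2 : X1 → X2 → Y2 → ℝ)
    (hW1 : ∀ x1 x2, IsDist (W1 x1 x2)) (hW2 : ∀ x1 x2, IsDist (W2 x1 x2))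
    (Pstar : X1 → ℝ) (ha : CondA W2 Pstar)
    (P : X1 → X2 → ℝ) (hP : IsJointDist P) :
    condMI12 P W2 ≤ condMI12 (fun x1 x2 => Pstar x1 * margin2 P x2) W2 := by
  unfold condMI12
  apply Finset.sum_le_sum
  intro x2 _
  have hm0 : 0 ≤ margin2 P x2 := Finset.sum_nonneg fun x1 _ => hP.1 x1 x2
  have hmarg : margin2 (fun x1 x2 => Pstar x1 * margin2 P x2) x2 = margin2 P x2 := by
    unfold margin2
    rw [← Finset.sum_mul, ha.1.2, one_mul]
  rcases eq_or_lt_of_le hm0 with h0 | hpos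
  · rw [hmarg, ← h0]
    simp
  · rw [hmarg]
    have hcond : cond1given2 (fun x1 x2 => Pstar x1 * margin2 P x2) x2 = Pstar := by
      funext x1
      unfold cond1given2
      rw [hmarg]
      field_simp
    rw [hcond]
    apply mul_le_mul_of_nonneg_left _ hm0
    apply ha.2 x2
    constructor
    · intro x1
      exact div_nonneg (hP.1 x1 x2) hm0
    · unfold cond1given2
      rw [← Finset.sum_div]
      exact div_self (ne_of_gt hpos)

end TWC
end

section
/- Suppose the DM-TWC satisfies condition (b1). Then for every joint input distribution P⁽¹⁾_{X₁,X₂} with marginal P⁽¹⁾_{X₂} and every distribution Q on 𝒳₁, setting P⁽²⁾_{X₁,X₂} = Q·P⁽¹⁾_{X₂}, one has I⁽¹⁾(X₂;Y₁|X₁) ≤ I⁽²⁾(X₂;Y₁|X₁). -/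
open scoped BigOperators

section TWC

variable {X1 X2 Y1 Y2 : Type*} [Fintype X1] [Fintype X2] [Fintype Y1] [Fintype Y2]

/-- Decomposition of mutual information into output entropy minus conditional entropy. -/
lemma mutInfo_decomp {A B : Type*} [Fintype A] [Fintype B] (P : A → ℝ) (W : A → B → ℝ)
    (hP : ∀ a, 0 ≤ P a) (hW : ∀ a b, 0 ≤ W a b) :
    mutInfo P W = (Real.log 2)⁻¹ *
      ((∑ b, Real.negMulLog (∑ a, P a * W a b)) -
        ∑ a, P a * ∑ b, Real.negMulLog (W a b)) := by
  have key : ∀ a b, P a * W a b * Real.logb 2 (W a b / ∑ a', P a' * W a' b)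
      = (Real.log 2)⁻¹ * (P a * W a b * Real.log (W a b)
          - P a * W a b * Real.log (∑ a', P a' * W a' b)) := by
    intro a b
    rcases eq_or_lt_of_le (mul_nonneg (hP a) (hW a b)) with h | h
    · rw [← h]; ring
    · have hw : 0 < W a b := (hW a b).lt_of_ne (fun h0 => by rw [← h0] at h; simp at h)
      have hout : 0 < ∑ a', P a' * W a' b :=
        lt_of_lt_of_le h (Finset.single_le_sum
          (f := fun a' => P a' * W a' b)
          (fun i _ => mul_nonneg (hP i) (hW i b)) (Finset.mem_univ a))
      rw [Real.logb, Real.log_div (ne_of_gt hw) (ne_of_gt hout)]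
      ring
  have e1 : ∑ a, ∑ b, P a * W a b * Real.log (W a b)
      = -(∑ a, P a * ∑ b, Real.negMulLog (W a b)) := by
    rw [← Finset.sum_neg_distrib]
    refine Finset.sum_congr rfl fun a _ => ?_
    rw [Finset.mul_sum, ← Finset.sum_neg_distrib]
    refine Finset.sum_congr rfl fun b _ => ?_
    rw [Real.negMulLog]; ring
  have e2 : ∑ a, ∑ b, P a * W a b * Real.log (∑ a', P a' * W a' b)
      = -(∑ b, Real.negMulLog (∑ a, P a * W a b)) := by
    rw [Finset.sum_comm, ← Finset.sum_neg_distrib]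
    refine Finset.sum_congr rfl fun b _ => ?_
    rw [← Finset.sum_mul, Real.negMulLog]; ring
  calc mutInfo P W
      = ∑ a, ∑ b, (Real.log 2)⁻¹ * (P a * W a b * Real.log (W a b)
          - P a * W a b * Real.log (∑ a', P a' * W a' b)) := by
        rw [mutInfo]
        exact Finset.sum_congr rfl fun a _ => Finset.sum_congr rfl fun b _ => key a b
    _ = (Real.log 2)⁻¹ * ((∑ a, ∑ b, P a * W a b * Real.log (W a b))
          - ∑ a, ∑ b, P a * W a b * Real.log (∑ a', P a' * W a' b)) := by
        simp only [← Finset.mul_sum, Finset.sum_sub_distrib, mul_sub]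
    _ = _ := by rw [e1, e2]; ring

/-- Mutual information is concave in the input distribution (on the nonneg orthant). -/
lemma mutInfo_concaveOn {A B : Type*} [Fintype A] [Fintype B] (W : A → B → ℝ)
    (hW : ∀ a b, 0 ≤ W a b) :
    ConcaveOn ℝ {p : A → ℝ | ∀ a, 0 ≤ p a} (fun p => mutInfo p W) := by
  constructor
  · intro p hp q hq a b ha hb hab
    intro y
    show 0 ≤ a * p y + b * q y
    exact add_nonneg (mul_nonneg ha (hp y)) (mul_nonneg hb (hq y))
  · intro p hp q hq a b ha hb hab
    rw [Set.mem_setOf_eq] at hp hq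
    have hmix : ∀ y, 0 ≤ (a • p + b • q) y := fun y =>
      add_nonneg (mul_nonneg ha (hp y)) (mul_nonneg hb (hq y))
    simp only [smul_eq_mul]
    rw [mutInfo_decomp p W hp hW, mutInfo_decomp q W hq hW,
      mutInfo_decomp _ W hmix hW]
    have hc : (0:ℝ) ≤ (Real.log 2)⁻¹ :=
      inv_nonneg.2 (Real.log_nonneg one_le_two)
    have hmixout : ∀ bb, (∑ x, (a • p + b • q) x * W x bb)
        = a * (∑ x, p x * W x bb) + b * (∑ x, q x * W x bb) := by
      intro bb
      simp only [Pi.add_apply, Pi.smul_apply, smul_eq_mul, add_mul, mul_assoc,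
        Finset.sum_add_distrib, Finset.mul_sum]
    have hS : a * (∑ bb, Real.negMulLog (∑ x, p x * W x bb))
        + b * (∑ bb, Real.negMulLog (∑ x, q x * W x bb))
        ≤ ∑ bb, Real.negMulLog (∑ x, (a • p + b • q) x * W x bb) := by
      rw [Finset.mul_sum, Finset.mul_sum, ← Finset.sum_add_distrib]
      refine Finset.sum_le_sum fun bb _ => ?_
      rw [hmixout bb]
      have hmem1 : (∑ x, p x * W x bb) ∈ Set.Ici (0:ℝ) :=
        Finset.sum_nonneg fun x _ => mul_nonneg (hp x) (hW x bb)
      have hmem2 : (∑ x, q x * W x bb) ∈ Set.Ici (0:ℝ) :=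
        Finset.sum_nonneg fun x _ => mul_nonneg (hq x) (hW x bb)
      have := Real.concaveOn_negMulLog.2 hmem1 hmem2 ha hb hab
      simpa using this
    have hL : (∑ x, (a • p + b • q) x * ∑ bb, Real.negMulLog (W x bb))
        = a * (∑ x, p x * ∑ bb, Real.negMulLog (W x bb))
          + b * (∑ x, q x * ∑ bb, Real.negMulLog (W x bb)) := by
      simp only [Pi.add_apply, Pi.smul_apply, smul_eq_mul, add_mul, mul_assoc,
        Finset.sum_add_distrib, Finset.mul_sum]
    rw [hL]
    nlinarith [mul_le_mul_of_nonneg_left hS hc]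

/-- under condition (b1), I⁽¹⁾(X₂;Y₁|X₁) ≤ I⁽²⁾(X₂;Y₁|X₁) where
P⁽²⁾ = Q·P⁽¹⁾_{X₂} for any input distribution Q on 𝒳₁. -/
theorem stmt11 [Nonempty X1] [Nonempty X2]
    (W1 : X1 → X2 → Y1 → ℝ) (W2 : X1 → X2 → Y2 → ℝ)
    (hW1 : ∀ x1 x2, IsDist (W1 x1 x2)) (hW2 : ∀ x1 x2, IsDist (W2 x1 x2))
    (hb1 : CondB1 W1)
    (P : X1 → X2 → ℝ) (hP : IsJointDist P)
    (Q : X1 → ℝ) (hQ : IsDist Q) :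
    condMI21 P W1 ≤ condMI21 (fun x1 x2 => Q x1 * margin2 P x2) W1 := by
  obtain ⟨hPnn, hPsum⟩ := hP
  obtain ⟨hQnn, hQsum⟩ := hQ
  set x0 : X1 := Classical.arbitrary X1 with hx0
  set F : (X2 → ℝ) → ℝ := fun p => mutInfo p (fun x2 => W1 x0 x2) with hF
  -- basic facts about the marginals
  have hm1nn : ∀ x1, 0 ≤ margin1 P x1 := fun x1 =>
    Finset.sum_nonneg fun x2 _ => hPnn x1 x2
  have hm1sum : ∑ x1, margin1 P x1 = 1 := hPsum
  have hm2nn : ∀ x2, 0 ≤ margin2 P x2 := fun x2 =>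
    Finset.sum_nonneg fun x1 _ => hPnn x1 x2
  have hm2sum : ∑ x2, margin2 P x2 = 1 := by
    simp only [margin2]; rw [Finset.sum_comm]; exact hPsum
  have hm2dist : IsDist (margin2 P) := ⟨hm2nn, hm2sum⟩
  have hzero : ∀ x1, margin1 P x1 = 0 → ∀ x2, P x1 x2 = 0 := by
    intro x1 h x2
    have := (Finset.sum_eq_zero_iff_of_nonneg
      (fun x2 _ => hPnn x1 x2)).1 h x2 (Finset.mem_univ x2)
    exact this
  have hWnn : ∀ x2 y, 0 ≤ W1 x0 x2 y := fun x2 y => (hW1 x0 x2).1 y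
  have hconc := mutInfo_concaveOn (fun x2 => W1 x0 x2) hWnn
  -- left side equals a mixture of F-values
  have hLHS : condMI21 P W1 = ∑ x1, margin1 P x1 * F (cond2given1 P x1) := by
    rw [condMI21]
    refine Finset.sum_congr rfl fun x1 _ => ?_
    by_cases h : margin1 P x1 = 0
    · rw [h]; ring
    · have hdist : IsDist (cond2given1 P x1) := by
        constructor
        · intro x2; exact div_nonneg (hPnn x1 x2) (hm1nn x1)
        · rw [show (∑ x2, cond2given1 P x1 x2) = (∑ x2, P x1 x2) / margin1 P x1 by
            rw [Finset.sum_div]; rfl]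
          rw [show (∑ x2, P x1 x2) = margin1 P x1 from rfl]
          exact div_self h
      rw [hb1 (cond2given1 P x1) hdist x1 x0]
  -- Jensen
  have hJen : ∑ x1, margin1 P x1 * F (cond2given1 P x1) ≤ F (margin2 P) := by
    have hmem : ∀ x1 : X1, x1 ∈ Finset.univ →
        cond2given1 P x1 ∈ {p : X2 → ℝ | ∀ a, 0 ≤ p a} := by
      intro x1 _ x2
      exact div_nonneg (hPnn x1 x2) (hm1nn x1)
    have hmixeq : (∑ x1, margin1 P x1 • cond2given1 P x1) = margin2 P := by
      funext x2
      rw [Finset.sum_apply]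
      simp only [margin2]
      refine Finset.sum_congr rfl fun x1 _ => ?_
      show margin1 P x1 * (P x1 x2 / margin1 P x1) = P x1 x2
      by_cases h : margin1 P x1 = 0
      · rw [h, hzero x1 h x2]; ring
      · field_simp
    have := hconc.le_map_sum (t := Finset.univ) (w := margin1 P)
      (p := cond2given1 P) (fun i _ => hm1nn i) hm1sum hmem
    rw [hmixeq] at this
    simpa [smul_eq_mul] using this
  -- right side equals F (margin2 P)
  have hRHS : condMI21 (fun x1 x2 => Q x1 * margin2 P x2) W1 = F (margin2 P) := by
    rw [condMI21]
    have hmarg : ∀ x1, margin1 (fun x1 x2 => Q x1 * margin2 P x2) x1 = Q x1 := by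
      intro x1
      rw [margin1, ← Finset.mul_sum, hm2sum, mul_one]
    have : ∀ x1 : X1,
        margin1 (fun x1 x2 => Q x1 * margin2 P x2) x1 *
          mutInfo (cond2given1 (fun x1 x2 => Q x1 * margin2 P x2) x1)
            (fun x2 => W1 x1 x2) = Q x1 * F (margin2 P) := by
      intro x1
      rw [hmarg x1]
      by_cases h : Q x1 = 0
      · rw [h]; ring
      · have hcond : cond2given1 (fun x1 x2 => Q x1 * margin2 P x2) x1 = margin2 P := by
          funext x2
          rw [cond2given1, hmarg x1]
          exact mul_div_cancel_left₀ _ h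
        rw [hcond, hb1 (margin2 P) hm2dist x1 x0]
    rw [Finset.sum_congr rfl fun x1 _ => this x1, ← Finset.sum_mul, hQsum, one_mul]
  rw [hLHS, hRHS]
  exact hJen

end TWC
end
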